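/- arXiv:1910.13010 — 6 statements merged into one kernel-verified Lean document; each statement's English description precedes it below -/
import Mathlib

section
/- Let f : ℝⁿ → ℝ and g : ℝᵐ → ℝ be C² functions, v ≠ 0 and p, q ∈ ℝ. Suppose (θ, φ) : ℝ → ℝⁿ × ℝᵐ is a global solution of the continuous GDA dynamics θ'(t) = -v ∇f(θ(t)) (g(φ(t)) - q), φ'(t) = v ∇g(φ(t)) (f(θ(t)) - p), and γ : ℝ → ℝⁿ is a global solution of the gradient-ascent system γ'(t) = ∇f(γ(t)) with γ(0) = θ(0). Then for every t ∈ ℝ such that ∫₀ᵗ -v (g(φ(s)) - q) ds lies in ℝ we have θ(t) = γ(∫₀ᵗ -v (g(φ(s)) - q) ds). -/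
/-!
By the chain rule, `t ↦ γ (∫₀ᵗ a)` with `a s = -v (g (φ s) - q)` solves the same non-autonomous
equation `x' = a t • ∇f x` as `θ`, and both start at `θ 0`. Since `f` is `C²`, `∇f` is locally
Lipschitz, so solutions of this equation are unique: on a bounded time interval both trajectories
stay in a compact set, on which `∇f` is Lipschitz and `a` is bounded.
-/

open Set

theorem ContDiff.gradient {F : Type*} [NormedAddCommGroup F] [InnerProductSpace ℝ F]
    [CompleteSpace F] {f : F → ℝ} {m n : WithTop ℕ∞} (hf : ContDiff ℝ n f) (hmn : m + 1 ≤ n) :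
    ContDiff ℝ m (gradient f) := by
  change ContDiff ℝ m ((InnerProductSpace.toDual ℝ F).symm ∘ fderiv ℝ f)
  exact (InnerProductSpace.toDual ℝ F).symm.contDiff.comp (hf.fderiv_right hmn)

theorem eq_of_hasDerivAt_smul_of_locallyLipschitz {E : Type*} [NormedAddCommGroup E]
    [NormedSpace ℝ E] {F : E → E} (hF : LocallyLipschitz F) {a : ℝ → ℝ} (ha : Continuous a)
    {x y : ℝ → E} (hx : ∀ t, HasDerivAt x (a t • F (x t)) t)
    (hy : ∀ t, HasDerivAt y (a t • F (y t)) t) {t₀ : ℝ} (h₀ : x t₀ = y t₀) : x = y := by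
  have hxc : Continuous x := continuous_iff_continuousAt.2 fun t => (hx t).continuousAt
  have hyc : Continuous y := continuous_iff_continuousAt.2 fun t => (hy t).continuousAt
  funext t
  obtain ⟨A, B, ht, ht₀⟩ : ∃ A B, t ∈ Ioo A B ∧ t₀ ∈ Ioo A B :=
    ⟨min t t₀ - 1, max t t₀ + 1, by constructor <;> constructor <;> grind⟩
  set s := x '' Icc A B ∪ y '' Icc A B
  obtain ⟨K, hK⟩ := (hF.locallyLipschitzOn (s := s)).exists_lipschitzOnWith_of_compact
    ((isCompact_Icc.image hxc).union (isCompact_Icc.image hyc))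
  obtain ⟨M, hM⟩ := (isCompact_Icc (a := A) (b := B)).exists_bound_of_continuousOn ha.continuousOn
  have hV : ∀ τ ∈ Ioo A B, LipschitzOnWith (M.toNNReal * K) (fun z => a τ • F z) s := by
    intro τ hτ
    refine ((lipschitzWith_smul (a τ)).comp_lipschitzOnWith hK).weaken ?_
    gcongr
    rw [← NNReal.coe_le_coe, coe_nnnorm]
    exact (hM τ (Ioo_subset_Icc_self hτ)).trans (Real.le_coe_toNNReal M)
  exact ODE_solution_unique_of_mem_Ioo hV ht₀
    (fun τ hτ => ⟨hx τ, .inl ⟨τ, Ioo_subset_Icc_self hτ, rfl⟩⟩)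
    (fun τ hτ => ⟨hy τ, .inr ⟨τ, Ioo_subset_Icc_self hτ, rfl⟩⟩) h₀ ht

theorem stmt_1_general {n m : ℕ} (f : EuclideanSpace ℝ (Fin n) → ℝ)
    (g : EuclideanSpace ℝ (Fin m) → ℝ)
    (hf : ContDiff ℝ 2 f) (hg : ContDiff ℝ 2 g)
    (v p q : ℝ)
    (θ : ℝ → EuclideanSpace ℝ (Fin n)) (φ : ℝ → EuclideanSpace ℝ (Fin m))
    (hθ : ∀ t : ℝ, HasDerivAt θ ((-(v * (g (φ t) - q))) • gradient f (θ t)) t)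
    (hφ : ∀ t : ℝ, HasDerivAt φ ((v * (f (θ t) - p)) • gradient g (φ t)) t)
    (γ : ℝ → EuclideanSpace ℝ (Fin n))
    (hγ : ∀ t : ℝ, HasDerivAt γ (gradient f (γ t)) t)
    (hγ0 : γ 0 = θ 0) :
    ∀ t : ℝ, θ t = γ (∫ s in (0:ℝ)..t, -(v * (g (φ s) - q))) := by
  set a : ℝ → ℝ := fun s => -(v * (g (φ s) - q))
  set τ : ℝ → ℝ := fun t => ∫ s in (0:ℝ)..t, a s
  have hφc : Continuous φ := continuous_iff_continuousAt.2 fun t => (hφ t).continuousAt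
  have ha : Continuous a := by
    have := hg.continuous
    fun_prop
  have hγτ : ∀ t, HasDerivAt (γ ∘ τ) (a t • gradient f ((γ ∘ τ) t)) t :=
    fun t => (hγ (τ t)).scomp t (ha.integral_hasStrictDerivAt 0 t).hasDerivAt
  have hθγ := eq_of_hasDerivAt_smul_of_locallyLipschitz
    (hf.gradient (m := 1) (by norm_num)).locallyLipschitz ha hθ hγτ (t₀ := 0) (by simp [τ, hγ0])
  exact congrFun hθγ

/-- Along the continuous GDA dynamics, `θ` stays on the gradient-ascent
trajectory `γ` with `γ 0 = θ 0`, reparametrized by time `∫₀ᵗ -v (g(φ s) - q) ds`. -/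
theorem stmt_1 {n m : ℕ} (f : EuclideanSpace ℝ (Fin n) → ℝ)
    (g : EuclideanSpace ℝ (Fin m) → ℝ)
    (hf : ContDiff ℝ 2 f) (hg : ContDiff ℝ 2 g)
    (v p q : ℝ) (hv : v ≠ 0)
    (θ : ℝ → EuclideanSpace ℝ (Fin n)) (φ : ℝ → EuclideanSpace ℝ (Fin m))
    (hθ : ∀ t : ℝ, HasDerivAt θ ((-(v * (g (φ t) - q))) • gradient f (θ t)) t)
    (hφ : ∀ t : ℝ, HasDerivAt φ ((v * (f (θ t) - p)) • gradient g (φ t)) t)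
    (γ : ℝ → EuclideanSpace ℝ (Fin n))
    (hγ : ∀ t : ℝ, HasDerivAt γ (gradient f (γ t)) t)
    (hγ0 : γ 0 = θ 0) :
    ∀ t : ℝ, θ t = γ (∫ s in (0:ℝ)..t, -(v * (g (φ s) - q))) :=
  stmt_1_general f g hf hg v p q θ φ hθ hφ γ hγ hγ0
end

section
/- Consider the planar hidden-game dynamics: let I, J ⊆ ℝ be open intervals with p ∈ I and q ∈ J, v ≠ 0, and F, G : ℝ → ℝ continuous functions that are strictly positive on I and J respectively. Suppose f, g : ℝ → ℝ are differentiable with f(t) ∈ I, g(t) ∈ J for all t, and satisfy f'(t) = -v F(f(t)) (g(t) - q) and g'(t) = v G(g(t)) (f(t) - p). Then the energy H(f(t), g(t)) = ∫_p^{f(t)} (z - p)/F(z) dz + ∫_q^{g(t)} (z - q)/G(z) dz is constant in t. -/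
open intervalIntegral

/-! Each term of the energy is a primitive, so by the chain rule `d/dt H(f t, g t)` equals
`(f - p)/F(f) · (-v F(f) (g - q)) + (g - q)/G(g) · v G(g) (f - p)`, in which the factors `F(f)` and
`G(g)` cancel (they are positive on `I` and `J`) and the two products cancel each other. -/

theorem hasDerivAt_integral_of_continuousOn {s : Set ℝ} {φ : ℝ → ℝ} {a x : ℝ}
    (hs : IsOpen s) (hs' : s.OrdConnected) (hφ : ContinuousOn φ s) (ha : a ∈ s) (hx : x ∈ s) :
    HasDerivAt (fun u => ∫ z in a..u, φ z) (φ x) x :=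
  integral_hasDerivAt_right (hφ.mono (hs'.uIcc_subset ha hx)).intervalIntegrable
    (hφ.stronglyMeasurableAtFilter hs x hx) ((hφ x hx).continuousAt (hs.mem_nhds hx))

theorem hasDerivAt_integral_sub_div {I : Set ℝ} {F : ℝ → ℝ} {p x : ℝ}
    (hIo : IsOpen I) (hIc : Convex ℝ I) (hF : Continuous F) (hFpos : ∀ x ∈ I, 0 < F x)
    (hp : p ∈ I) (hx : x ∈ I) :
    HasDerivAt (fun u => ∫ z in p..u, (z - p) / F z) ((x - p) / F x) x :=
  hasDerivAt_integral_of_continuousOn hIo hIc.ordConnected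
    ((continuous_id.sub continuous_const).continuousOn.div hF.continuousOn
      fun z hz => (hFpos z hz).ne') hp hx

theorem stmt_5_general (I J : Set ℝ) (hIo : IsOpen I) (hIc : Convex ℝ I)
    (hJo : IsOpen J) (hJc : Convex ℝ J)
    (p q v : ℝ) (hp : p ∈ I) (hq : q ∈ J)
    (F G : ℝ → ℝ) (hF : Continuous F) (hG : Continuous G)
    (hFpos : ∀ x ∈ I, 0 < F x) (hGpos : ∀ y ∈ J, 0 < G y)
    (f g : ℝ → ℝ)
    (hfI : ∀ t : ℝ, f t ∈ I) (hgJ : ∀ t : ℝ, g t ∈ J)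
    (hf : ∀ t : ℝ, HasDerivAt f (-(v * F (f t) * (g t - q))) t)
    (hg : ∀ t : ℝ, HasDerivAt g (v * G (g t) * (f t - p)) t) :
    ∀ t : ℝ,
      ((∫ z in p..(f t), (z - p) / F z) + ∫ z in q..(g t), (z - q) / G z) =
      ((∫ z in p..(f 0), (z - p) / F z) + ∫ z in q..(g 0), (z - q) / G z) := by
  have hH : ∀ t, HasDerivAt
      (fun t => (∫ z in p..(f t), (z - p) / F z) + ∫ z in q..(g t), (z - q) / G z) 0 t := by
    intro t
    have hFne : F (f t) ≠ 0 := (hFpos _ (hfI t)).ne'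
    have hGne : G (g t) ≠ 0 := (hGpos _ (hgJ t)).ne'
    refine (((hasDerivAt_integral_sub_div hIo hIc hF hFpos hp (hfI t)).comp t (hf t)).add
      ((hasDerivAt_integral_sub_div hJo hJc hG hGpos hq (hgJ t)).comp t (hg t))).congr_deriv ?_
    field_simp
    ring
  exact fun t => is_const_of_deriv_eq_zero (fun s => (hH s).differentiableAt)
    (fun s => (hH s).deriv) t 0

/-- The energy
`H(f t, g t) = ∫_p^{f t} (z-p)/F z dz + ∫_q^{g t} (z-q)/G z dz` is conserved along the
planar hidden-game dynamics. -/
theorem stmt_5 (I J : Set ℝ) (hIo : IsOpen I) (hIc : Convex ℝ I)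
    (hJo : IsOpen J) (hJc : Convex ℝ J)
    (p q v : ℝ) (hp : p ∈ I) (hq : q ∈ J) (hv : v ≠ 0)
    (F G : ℝ → ℝ) (hF : Continuous F) (hG : Continuous G)
    (hFpos : ∀ x ∈ I, 0 < F x) (hGpos : ∀ y ∈ J, 0 < G y)
    (f g : ℝ → ℝ)
    (hfI : ∀ t : ℝ, f t ∈ I) (hgJ : ∀ t : ℝ, g t ∈ J)
    (hf : ∀ t : ℝ, HasDerivAt f (-(v * F (f t) * (g t - q))) t)
    (hg : ∀ t : ℝ, HasDerivAt g (v * G (g t) * (f t - p)) t) :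
    ∀ t : ℝ,
      ((∫ z in p..(f t), (z - p) / F z) + ∫ z in q..(g t), (z - q) / G z) =
      ((∫ z in p..(f 0), (z - p) / F z) + ∫ z in q..(g 0), (z - q) / G z) :=
  stmt_5_general I J hIo hIc hJo hJc p q v hp hq F G hF hG hFpos hGpos f g hfI hgJ hf hg
end

section
/- Let u be an N×M real matrix, and let p ∈ ℝ^N, q ∈ ℝ^M with ∑_i p_i = 1 and ∑_j q_j = 1, and λ*, μ* ∈ ℝ satisfy the KKT conditions ∑_{j=1}^M u_{ij} q_j + λ* = 0 for all i and ∑_{i=1}^N u_{ij} p_i + μ* = 0 for all j. Let I_i, J_j ⊆ ℝ be open intervals with p_i ∈ I_i, q_j ∈ J_j, and F_i, G_j : ℝ → ℝ continuous and strictly positive on I_i, J_j respectively. Suppose f_i, g_j, λ, μ : ℝ → ℝ are differentiable with f_i(t) ∈ I_i, g_j(t) ∈ J_j, and satisfy f_i'(t) = -F_i(f_i(t)) (∑_j u_{ij} g_j(t) + λ(t)), g_j'(t) = G_j(g_j(t)) (∑_i u_{ij} f_i(t) + μ(t)), λ'(t) = ∑_i f_i(t) - 1, μ'(t) = -(∑_j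 g_j(t) - 1). Then the quantity H(t) = ∑_{i=1}^N ∫_{p_i}^{f_i(t)} (z - p_i)/F_i(z) dz + ∑_{j=1}^M ∫_{q_j}^{g_j(t)} (z - q_j)/G_j(z) dz + (λ(t) - λ*)²/2 + (μ(t) - μ*)²/2 is constant in t. -/
/-!
Along the flow the weights `1 / F_i`, `1 / G_j` cancel the speed factors, so the integral terms of
`H` contribute `-(f - p) ⬝ (u g + λ)` and `(g - q) ⬝ (uᵀ f + μ)` to `H'`. By the KKT conditions
these equal `-(f - p) ⬝ (u (g - q) + λ - λ*)` and `(g - q) ⬝ (uᵀ (f - p) + μ - μ*)`; the bilinear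
parts cancel, and since `∑ p = ∑ q = 1` the rest cancels against the derivatives of the two
quadratic terms.
-/

open intervalIntegral

theorem hasDerivAt_integral_sub_div_comp {S : Set ℝ} (hS : S.OrdConnected) {F : ℝ → ℝ}
    (hF : Continuous F) (hF0 : ∀ z ∈ S, F z ≠ 0) {c : ℝ} (hc : c ∈ S) {x : ℝ → ℝ} {t w : ℝ}
    (hxt : x t ∈ S) (hx : HasDerivAt x (F (x t) * w) t) :
    HasDerivAt (fun s => ∫ z in c..x s, (z - c) / F z) ((x t - c) * w) t := by
  have hint : IntervalIntegrable (fun z => (z - c) / F z) MeasureTheory.volume c (x t) :=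
    ((continuousOn_id.sub continuousOn_const).div hF.continuousOn fun z hz =>
      hF0 z (hS.uIcc_subset hc hxt hz)).intervalIntegrable
  have hmeas : Measurable fun z => (z - c) / F z := by fun_prop
  have hPrim : HasDerivAt (fun y => ∫ z in c..y, (z - c) / F z) ((x t - c) / F (x t)) (x t) :=
    integral_hasDerivAt_right hint hmeas.stronglyMeasurable.stronglyMeasurableAtFilter
      ((continuousAt_id.sub continuousAt_const).div hF.continuousAt (hF0 _ hxt))
  exact (hPrim.comp t hx).congr_deriv (by field_simp [hF0 _ hxt])

theorem HasDerivAt.sq_sub_div_two {l : ℝ → ℝ} {l' t : ℝ} (hl : HasDerivAt l l' t) (c : ℝ) :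
    HasDerivAt (fun s => (l s - c) ^ 2 / 2) ((l t - c) * l') t :=
  (((hl.sub_const c).pow 2).div_const 2).congr_deriv (by ring)

theorem hamiltonian_deriv_eq_zero_of_kkt {ι κ : Type*} [Fintype ι] [Fintype κ] (u : Matrix ι κ ℝ)
    {p x : ι → ℝ} {q y : κ → ℝ} {a b a₀ b₀ : ℝ} (hp : ∑ i, p i = 1) (hq : ∑ j, q j = 1)
    (hKKT1 : ∀ i, ∑ j, u i j * q j + a₀ = 0) (hKKT2 : ∀ j, ∑ i, u i j * p i + b₀ = 0) :
    (∑ i, (x i - p i) * -(∑ j, u i j * y j + a)) +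
      (∑ j, (y j - q j) * (∑ i, u i j * x i + b)) +
      (a - a₀) * (∑ i, x i - 1) + (b - b₀) * -(∑ j, y j - 1) = 0 := by
  have hrow : ∀ i, ∑ j, u i j * y j + a = ∑ j, u i j * (y j - q j) + (a - a₀) := fun i => by
    simp only [mul_sub, Finset.sum_sub_distrib]
    linarith [hKKT1 i]
  have hcol : ∀ j, ∑ i, u i j * x i + b = ∑ i, u i j * (x i - p i) + (b - b₀) := fun j => by
    simp only [mul_sub, Finset.sum_sub_distrib]
    linarith [hKKT2 j]
  have hbilin : ∑ i, (x i - p i) * ∑ j, u i j * (y j - q j) =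
      ∑ j, (y j - q j) * ∑ i, u i j * (x i - p i) := by
    simp only [Finset.mul_sum]
    rw [Finset.sum_comm]
    exact Finset.sum_congr rfl fun j _ => Finset.sum_congr rfl fun i _ => by ring
  have hx : ∑ i, x i - 1 = ∑ i, (x i - p i) := by rw [Finset.sum_sub_distrib, hp]
  have hy : ∑ j, y j - 1 = ∑ j, (y j - q j) := by rw [Finset.sum_sub_distrib, hq]
  simp only [hrow, hcol, hx, hy, mul_add, mul_neg, Finset.sum_add_distrib, Finset.sum_neg_distrib,
    ← Finset.sum_mul]
  linear_combination -hbilin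

theorem stmt_11_general {N M : ℕ} (u : Matrix (Fin N) (Fin M) ℝ)
    (p : Fin N → ℝ) (q : Fin M → ℝ)
    (hp : ∑ i, p i = 1) (hq : ∑ j, q j = 1)
    (lamStar muStar : ℝ)
    (hKKT1 : ∀ i, ∑ j, u i j * q j + lamStar = 0)
    (hKKT2 : ∀ j, ∑ i, u i j * p i + muStar = 0)
    (I : Fin N → Set ℝ) (J : Fin M → Set ℝ)
    (hIc : ∀ i, Convex ℝ (I i))
    (hJc : ∀ j, Convex ℝ (J j))
    (hpI : ∀ i, p i ∈ I i) (hqJ : ∀ j, q j ∈ J j)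
    (F : Fin N → ℝ → ℝ) (G : Fin M → ℝ → ℝ)
    (hFc : ∀ i, Continuous (F i)) (hGc : ∀ j, Continuous (G j))
    (hFpos : ∀ i, ∀ x ∈ I i, 0 < F i x) (hGpos : ∀ j, ∀ y ∈ J j, 0 < G j y)
    (f : Fin N → ℝ → ℝ) (g : Fin M → ℝ → ℝ) (lam mu : ℝ → ℝ)
    (hfI : ∀ (i : Fin N) (t : ℝ), f i t ∈ I i)
    (hgJ : ∀ (j : Fin M) (t : ℝ), g j t ∈ J j)
    (hf : ∀ (i : Fin N) (t : ℝ),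
      HasDerivAt (f i) (-(F i (f i t) * (∑ j, u i j * g j t + lam t))) t)
    (hg : ∀ (j : Fin M) (t : ℝ),
      HasDerivAt (g j) (G j (g j t) * (∑ i, u i j * f i t + mu t)) t)
    (hlam : ∀ t : ℝ, HasDerivAt lam (∑ i, f i t - 1) t)
    (hmu : ∀ t : ℝ, HasDerivAt mu (-(∑ j, g j t - 1)) t) :
    ∀ t : ℝ,
      ((∑ i, ∫ z in (p i)..(f i t), (z - p i) / F i z) +
       (∑ j, ∫ z in (q j)..(g j t), (z - q j) / G j z) +
       (lam t - lamStar) ^ 2 / 2 + (mu t - muStar) ^ 2 / 2) =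
      ((∑ i, ∫ z in (p i)..(f i 0), (z - p i) / F i z) +
       (∑ j, ∫ z in (q j)..(g j 0), (z - q j) / G j z) +
       (lam 0 - lamStar) ^ 2 / 2 + (mu 0 - muStar) ^ 2 / 2) := by
  intro t
  have hH : ∀ s, HasDerivAt (fun s =>
      (∑ i, ∫ z in (p i)..(f i s), (z - p i) / F i z) +
      (∑ j, ∫ z in (q j)..(g j s), (z - q j) / G j z) +
      (lam s - lamStar) ^ 2 / 2 + (mu s - muStar) ^ 2 / 2) 0 s := by
    intro s
    have hfi := fun i => hasDerivAt_integral_sub_div_comp (hIc i).ordConnected (hFc i)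
      (fun z hz => (hFpos i z hz).ne') (hpI i) (hfI i s)
      ((hf i s).congr_deriv (neg_mul_eq_mul_neg _ _))
    have hgj := fun j => hasDerivAt_integral_sub_div_comp (hJc j).ordConnected (hGc j)
      (fun z hz => (hGpos j z hz).ne') (hqJ j) (hgJ j s) (hg j s)
    exact ((((HasDerivAt.fun_sum fun i _ => hfi i).add (HasDerivAt.fun_sum fun j _ => hgj j)).add
      ((hlam s).sq_sub_div_two lamStar)).add ((hmu s).sq_sub_div_two muStar)).congr_deriv
      (hamiltonian_deriv_eq_zero_of_kkt u hp hq hKKT1 hKKT2)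
  exact is_const_of_deriv_eq_zero (fun s => (hH s).differentiableAt) (fun s => (hH s).deriv) t 0

/-- The Hamiltonian
`H = ∑_i ∫_{p_i}^{f_i} (z-p_i)/F_i + ∑_j ∫_{q_j}^{g_j} (z-q_j)/G_j + (λ-λ*)²/2 + (μ-μ*)²/2`
is conserved along the multi-strategy hidden-game dynamics in functional form. -/
theorem stmt_11 {N M : ℕ} (u : Matrix (Fin N) (Fin M) ℝ)
    (p : Fin N → ℝ) (q : Fin M → ℝ)
    (hp : ∑ i, p i = 1) (hq : ∑ j, q j = 1)
    (lamStar muStar : ℝ)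
    (hKKT1 : ∀ i, ∑ j, u i j * q j + lamStar = 0)
    (hKKT2 : ∀ j, ∑ i, u i j * p i + muStar = 0)
    (I : Fin N → Set ℝ) (J : Fin M → Set ℝ)
    (hIo : ∀ i, IsOpen (I i)) (hIc : ∀ i, Convex ℝ (I i))
    (hJo : ∀ j, IsOpen (J j)) (hJc : ∀ j, Convex ℝ (J j))
    (hpI : ∀ i, p i ∈ I i) (hqJ : ∀ j, q j ∈ J j)
    (F : Fin N → ℝ → ℝ) (G : Fin M → ℝ → ℝ)
    (hFc : ∀ i, Continuous (F i)) (hGc : ∀ j, Continuous (G j))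
    (hFpos : ∀ i, ∀ x ∈ I i, 0 < F i x) (hGpos : ∀ j, ∀ y ∈ J j, 0 < G j y)
    (f : Fin N → ℝ → ℝ) (g : Fin M → ℝ → ℝ) (lam mu : ℝ → ℝ)
    (hfI : ∀ (i : Fin N) (t : ℝ), f i t ∈ I i)
    (hgJ : ∀ (j : Fin M) (t : ℝ), g j t ∈ J j)
    (hf : ∀ (i : Fin N) (t : ℝ),
      HasDerivAt (f i) (-(F i (f i t) * (∑ j, u i j * g j t + lam t))) t)
    (hg : ∀ (j : Fin M) (t : ℝ),
      HasDerivAt (g j) (G j (g j t) * (∑ i, u i j * f i t + mu t)) t)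
    (hlam : ∀ t : ℝ, HasDerivAt lam (∑ i, f i t - 1) t)
    (hmu : ∀ t : ℝ, HasDerivAt mu (-(∑ j, g j t - 1)) t) :
    ∀ t : ℝ,
      ((∑ i, ∫ z in (p i)..(f i t), (z - p i) / F i z) +
       (∑ j, ∫ z in (q j)..(g j t), (z - q j) / G j z) +
       (lam t - lamStar) ^ 2 / 2 + (mu t - muStar) ^ 2 / 2) =
      ((∑ i, ∫ z in (p i)..(f i 0), (z - p i) / F i z) +
       (∑ j, ∫ z in (q j)..(g j 0), (z - q j) / G j z) +
       (lam 0 - lamStar) ^ 2 / 2 + (mu 0 - muStar) ^ 2 / 2) :=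
  stmt_11_general u p q hp hq lamStar muStar hKKT1 hKKT2 I J hIc hJc hpI hqJ F G hFc hGc hFpos hGpos
    f g lam mu hfI hgJ hf hg hlam hmu
end

section
/- Let σ : ℝ → ℝ be the logistic sigmoid σ(x) = 1/(1 + e^{-x}) and let p ∈ (0, 1). Then the function h : ℝ → ℝ defined by h(θ) = ∫_p^{σ(θ)} (z - p)/(z² (1 - z)²) dz is convex on ℝ. -/
open intervalIntegral Real Set

/-! The integrand has the elementary primitive `energyPrimitive p`, and substituting `z = σ θ`
(so `1/σ = 1 + e^{-θ}`, `1/(1 - σ) = 1 + e^θ`, `log σ - log (1 - σ) = θ`) gives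
`h θ = p e^{-θ} + (1 - p) e^θ + (1 - 2p) θ + const`, a nonnegative combination of
`e^{-θ}` and `e^θ` plus an affine function. -/

noncomputable def energyPrimitive (p z : ℝ) : ℝ :=
  (1 - 2 * p) * log z + p * z⁻¹ + (2 * p - 1) * log (1 - z) + (1 - p) * (1 - z)⁻¹

theorem hasDerivAt_energyPrimitive (p : ℝ) {z : ℝ} (hz0 : z ≠ 0) (hz1 : z ≠ 1) :
    HasDerivAt (energyPrimitive p) ((z - p) / (z ^ 2 * (1 - z) ^ 2)) z := by
  have hz1' : 1 - z ≠ 0 := sub_ne_zero.mpr hz1.symm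
  have hsub : HasDerivAt (fun z : ℝ => 1 - z) (-1) z := (hasDerivAt_id z).const_sub 1
  have hlog := (hasDerivAt_log hz0).const_mul (1 - 2 * p)
  have hinv := (hasDerivAt_inv hz0).const_mul p
  have hlog' := ((hasDerivAt_log hz1').comp z hsub).const_mul (2 * p - 1)
  have hinv' := ((hasDerivAt_inv hz1').comp z hsub).const_mul (1 - p)
  refine (((hlog.add hinv).add hlog').add hinv').congr_deriv ?_
  field_simp
  ring

theorem integral_energyIntegrand {p a b : ℝ} (ha : a ∈ Ioo (0 : ℝ) 1) (hb : b ∈ Ioo (0 : ℝ) 1) :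
    ∫ z in a..b, (z - p) / (z ^ 2 * (1 - z) ^ 2) = energyPrimitive p b - energyPrimitive p a := by
  have hsub : uIcc a b ⊆ Ioo 0 1 := ordConnected_Ioo.uIcc_subset ha hb
  have hne : ∀ z ∈ uIcc a b, z ≠ 0 ∧ z ≠ 1 := fun z hz =>
    ⟨(hsub hz).1.ne', (hsub hz).2.ne⟩
  refine integral_eq_sub_of_hasDerivAt
    (fun z hz => hasDerivAt_energyPrimitive p (hne z hz).1 (hne z hz).2) ?_
  refine (ContinuousOn.div (by fun_prop) (by fun_prop) fun z hz => ?_).intervalIntegrable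
  exact mul_ne_zero (pow_ne_zero _ (hne z hz).1)
    (pow_ne_zero _ (sub_ne_zero.mpr (hne z hz).2.symm))

theorem inv_one_add_exp_neg_mem_Ioo (θ : ℝ) : (1 + exp (-θ))⁻¹ ∈ Ioo (0 : ℝ) 1 :=
  ⟨by positivity, inv_lt_one_of_one_lt₀ (lt_add_of_pos_right 1 (exp_pos _))⟩

theorem energyPrimitive_inv_one_add_exp_neg (p θ : ℝ) :
    energyPrimitive p (1 + exp (-θ))⁻¹
      = (1 - 2 * p) * θ + p * (1 + exp (-θ)) + (1 - p) * (1 + exp θ) := by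
  have hpos : 0 < 1 + exp (-θ) := by positivity
  have hscale : 1 + exp θ = exp θ * (1 + exp (-θ)) := by
    rw [mul_add, ← exp_add, add_neg_cancel, exp_zero, mul_one, add_comm]
  have hcompl : 1 - (1 + exp (-θ))⁻¹ = (1 + exp θ)⁻¹ := by
    rw [exp_neg]
    field_simp
    ring
  rw [energyPrimitive, hcompl, log_inv, log_inv, inv_inv, inv_inv,
    hscale, log_mul (exp_pos _).ne' hpos.ne', log_exp]
  ring

theorem convexOn_univ_exp_neg_add_exp {a b : ℝ} (ha : 0 ≤ a) (hb : 0 ≤ b) (c d : ℝ) :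
    ConvexOn ℝ univ fun θ => a * exp (-θ) + b * exp θ + (c * θ + d) := by
  have hexp_neg : ConvexOn ℝ univ fun θ : ℝ => exp (-θ) :=
    convexOn_exp.comp_linearMap (-LinearMap.id)
  have haff : ConvexOn ℝ univ fun θ : ℝ => c * θ + d :=
    ((LinearMap.mul ℝ ℝ c).convexOn convex_univ).add_const d
  exact ((hexp_neg.smul ha).add (convexOn_exp.smul hb)).add haff

/-- For the logistic sigmoid `σ` and `p ∈ (0,1)`, the function
`θ ↦ ∫_p^{σ θ} (z-p)/(z²(1-z)²) dz` is convex on `ℝ`. -/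
theorem stmt_13 (σ : ℝ → ℝ) (hσ : ∀ x : ℝ, σ x = (1 + Real.exp (-x))⁻¹)
    (p : ℝ) (hp : p ∈ Set.Ioo (0:ℝ) 1) :
    ConvexOn ℝ Set.univ
      (fun θ : ℝ => ∫ z in p..(σ θ), (z - p) / (z ^ 2 * (1 - z) ^ 2)) := by
  have closed_form : (fun θ => ∫ z in p..(σ θ), (z - p) / (z ^ 2 * (1 - z) ^ 2))
      = fun θ => p * exp (-θ) + (1 - p) * exp θ + ((1 - 2 * p) * θ + (1 - energyPrimitive p p)) := by
    funext θ
    rw [hσ, integral_energyIntegrand hp (inv_one_add_exp_neg_mem_Ioo θ),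
      energyPrimitive_inv_one_add_exp_neg]
    ring
  rw [closed_form]
  exact convexOn_univ_exp_neg_add_exp hp.1.le (sub_nonneg.mpr hp.2.le) _ _
end

section
/- Let σ(x) = 1/(1 + e^{-x}) be the logistic sigmoid, u an N×M real matrix, p ∈ (0,1)^N and q ∈ (0,1)^M with ∑_i p_i = 1, ∑_j q_j = 1, and λ*, μ* ∈ ℝ with ∑_{j} u_{ij} q_j + λ* = 0 for all i and ∑_{i} u_{ij} p_i + μ* = 0 for all j. Define H(θ, φ, λ, μ) = ∑_{i=1}^N ∫_{p_i}^{σ(θ_i)} (z - p_i)/(z²(1-z)²) dz + ∑_{j=1}^M ∫_{q_j}^{σ(φ_j)} (z - q_j)/(z²(1-z)²) dz + (λ - λ*)²/2 + (μ - μ*)²/2 for (θ, φ, λ, μ) ∈ ℝ^N × ℝ^M × ℝ × ℝ. For α ≥ 0 let the discrete GDA update be θ_i⁺ = θ_i - α σ'(θ_i)(∑_j u_{ij} σ(φ_j) + λ), φ_j⁺ = φ_j + α σ'(φ_j)(∑_i u_{ij} σ(θ_i) + μ), λ⁺ = λ + α(∑_i σ(θ_i) - 1), μ⁺ = μ - α(∑_j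 σ(φ_j) - 1). Then H(θ⁺, φ⁺, λ⁺, μ⁺) ≥ H(θ, φ, λ, μ) for every (θ, φ, λ, μ). -/
/-!
Viewed as a function of the logit `x`, each integral term `∫ z in p..σ x, (z - p) / (z² (1 - z)²)`
has derivative `(σ x - p) / (σ x (1 - σ x)) = (1 - p) / (1 - σ x) - p / σ x`, which is
nondecreasing in `x`; so the term is convex in `x` and lies above its tangent lines. Since each GDA
step is preconditioned by `σ' = σ (1 - σ)`, the first-order change of `H` along the step is `α` times
`∑ⱼ (σ φⱼ - qⱼ)((uᵀσ(θ))ⱼ + μ) - ∑ᵢ (σ θᵢ - pᵢ)((u σ(φ))ᵢ + λ) + (λ - λ*)(∑ σ θ - 1) - (μ - μ*)(∑ σ φ - 1)`,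
which vanishes by bilinearity and the KKT conditions (these also force `λ* = μ*`). The quadratic
terms in `λ, μ` are convex too, so `H` can only grow.
-/

open intervalIntegral Set Real

theorem Monotone.mul_sub_le_intervalIntegral {f : ℝ → ℝ} (hf : Monotone f) (a b : ℝ) :
    f a * (b - a) ≤ ∫ x in a..b, f x := by
  rcases le_total a b with hab | hba
  · have h := integral_mono_on hab (intervalIntegrable_const (μ := MeasureTheory.volume))
      hf.intervalIntegrable fun x hx => hf hx.1
    simpa [integral_const, mul_comm] using h
  · have h := integral_mono_on hba hf.intervalIntegrable
      (intervalIntegrable_const (μ := MeasureTheory.volume)) fun x hx => hf hx.2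
    rw [integral_symm b a]
    simp only [integral_const, smul_eq_mul] at h
    linarith

theorem continuousOn_sub_div_sq_mul_one_sub_sq (p : ℝ) :
    ContinuousOn (fun z : ℝ => (z - p) / (z ^ 2 * (1 - z) ^ 2)) (Ioo 0 1) := by
  refine ContinuousOn.div (by fun_prop) (by fun_prop) fun z hz => ?_
  have : 0 < 1 - z := sub_pos.2 hz.2
  have := hz.1
  positivity

theorem intervalIntegrable_sub_div_sq_mul_one_sub_sq (p : ℝ) {a b : ℝ}
    (ha : a ∈ Ioo (0 : ℝ) 1) (hb : b ∈ Ioo (0 : ℝ) 1) :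
    IntervalIntegrable (fun z : ℝ => (z - p) / (z ^ 2 * (1 - z) ^ 2)) MeasureTheory.volume a b :=
  ((continuousOn_sub_div_sq_mul_one_sub_sq p).mono
    (ordConnected_Ioo.uIcc_subset ha hb)).intervalIntegrable

theorem monotoneOn_sub_div_mul_one_sub {p : ℝ} (hp0 : 0 ≤ p) (hp1 : p ≤ 1) :
    MonotoneOn (fun s : ℝ => (s - p) / (s * (1 - s))) (Ioo 0 1) := by
  intro s hs t ht hst
  have partial_fractions (r : ℝ) (hr : 0 < r) (hr' : 0 < 1 - r) :
      (r - p) / (r * (1 - r)) = (1 - p) / (1 - r) - p / r := by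
    field_simp
    ring
  simp only [partial_fractions s hs.1 (sub_pos.2 hs.2), partial_fractions t ht.1 (sub_pos.2 ht.2)]
  gcongr
  exacts [sub_pos.2 ht.2, hs.1]

theorem integral_comp_sigmoid_sub_div_sq_mul_one_sub_sq (p x y : ℝ) :
    ∫ z in sigmoid x..sigmoid y, (z - p) / (z ^ 2 * (1 - z) ^ 2)
      = ∫ w in x..y, (sigmoid w - p) / (sigmoid w * (1 - sigmoid w)) := by
  rw [← integral_comp_mul_deriv' (fun w _ => hasDerivAt_sigmoid w) (by fun_prop)
    ((continuousOn_sub_div_sq_mul_one_sub_sq p).mono (by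
      rintro _ ⟨w, -, rfl⟩
      exact ⟨sigmoid_pos w, sigmoid_lt_one w⟩))]
  refine integral_congr fun w _ => ?_
  have : 0 < 1 - sigmoid w := sub_pos.2 (sigmoid_lt_one w)
  have := sigmoid_pos w
  simp only [Function.comp]
  field_simp

theorem le_integral_sigmoid_add_deriv_mul {p : ℝ} (hp : p ∈ Ioo (0 : ℝ) 1) (x c : ℝ) :
    (∫ z in p..sigmoid x, (z - p) / (z ^ 2 * (1 - z) ^ 2)) + (sigmoid x - p) * c
      ≤ ∫ z in p..sigmoid (x + deriv sigmoid x * c), (z - p) / (z ^ 2 * (1 - z) ^ 2) := by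
  set y := x + deriv sigmoid x * c
  have hmem (w : ℝ) : sigmoid w ∈ Ioo (0 : ℝ) 1 := ⟨sigmoid_pos w, sigmoid_lt_one w⟩
  have hmono : Monotone fun w => (sigmoid w - p) / (sigmoid w * (1 - sigmoid w)) :=
    fun v w hvw => monotoneOn_sub_div_mul_one_sub hp.1.le hp.2.le (hmem v) (hmem w)
      (sigmoid_monotone hvw)
  have hslope :
      (sigmoid x - p) / (sigmoid x * (1 - sigmoid x)) * (y - x) = (sigmoid x - p) * c := by
    have : 0 < 1 - sigmoid x := sub_pos.2 (sigmoid_lt_one x)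
    have := sigmoid_pos x
    simp only [y, deriv_sigmoid]
    field_simp
    ring
  rw [← integral_add_adjacent_intervals
    (intervalIntegrable_sub_div_sq_mul_one_sub_sq p hp (hmem x))
    (intervalIntegrable_sub_div_sq_mul_one_sub_sq p (hmem x) (hmem y)),
    integral_comp_sigmoid_sub_div_sq_mul_one_sub_sq, ← hslope]
  gcongr
  exact hmono.mul_sub_le_intervalIntegral x y

theorem sum_le_sum_integral_sigmoid_add_deriv_mul {ι : Type*} [Fintype ι] {p : ι → ℝ}
    (hp : ∀ i, p i ∈ Ioo (0 : ℝ) 1) (x c : ι → ℝ) :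
    (∑ i, ∫ z in p i..sigmoid (x i), (z - p i) / (z ^ 2 * (1 - z) ^ 2))
        + ∑ i, (sigmoid (x i) - p i) * c i
      ≤ ∑ i, ∫ z in p i..sigmoid (x i + deriv sigmoid (x i) * c i),
          (z - p i) / (z ^ 2 * (1 - z) ^ 2) := by
  rw [← Finset.sum_add_distrib]
  gcongr with i
  exact le_integral_sigmoid_add_deriv_mul (hp i) (x i) (c i)

section BilinearKKT

variable {ι κ : Type*} [Fintype ι] [Fintype κ] (u : Matrix ι κ ℝ)

theorem sum_mul_sum_mul_comm (x : ι → ℝ) (y : κ → ℝ) :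
    ∑ i, x i * ∑ j, u i j * y j = ∑ j, y j * ∑ i, u i j * x i := by
  simp only [Finset.mul_sum]
  rw [Finset.sum_comm]
  exact Finset.sum_congr rfl fun j _ => Finset.sum_congr rfl fun i _ => by ring

theorem sum_mul_sum_of_kkt {q : κ → ℝ} {lamStar : ℝ}
    (hKKT : ∀ i, ∑ j, u i j * q j + lamStar = 0) (x : ι → ℝ) :
    ∑ i, x i * ∑ j, u i j * q j = -lamStar * ∑ i, x i := by
  rw [Finset.mul_sum]
  exact Finset.sum_congr rfl fun i _ => by rw [eq_neg_of_add_eq_zero_left (hKKT i)]; ring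

variable {p : ι → ℝ} {q : κ → ℝ} {lamStar muStar : ℝ}
  (hp : ∑ i, p i = 1) (hq : ∑ j, q j = 1)
  (hKKT1 : ∀ i, ∑ j, u i j * q j + lamStar = 0) (hKKT2 : ∀ j, ∑ i, u i j * p i + muStar = 0)
include hp hq hKKT1 hKKT2

theorem lamStar_eq_muStar_of_kkt : lamStar = muStar := by
  have h1 := sum_mul_sum_of_kkt u hKKT1 p
  have h2 := sum_mul_sum_of_kkt u.transpose hKKT2 q
  rw [sum_mul_sum_mul_comm] at h1
  simp only [Matrix.transpose_apply, hp, hq] at h1 h2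
  linarith

theorem sum_gda_pairing_of_kkt (x : ι → ℝ) (y : κ → ℝ) (lam mu : ℝ) :
    ∑ j, (y j - q j) * (∑ i, u i j * x i + mu) - ∑ i, (x i - p i) * (∑ j, u i j * y j + lam)
      = (mu - muStar) * (∑ j, y j - 1) - (lam - lamStar) * (∑ i, x i - 1) := by
  have hx := sum_mul_sum_of_kkt u hKKT1 x
  have hy := sum_mul_sum_of_kkt u.transpose hKKT2 y
  simp only [Matrix.transpose_apply] at hy
  simp only [sub_mul, mul_add, Finset.sum_add_distrib, Finset.sum_sub_distrib, ← Finset.sum_mul]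
  linear_combination (sum_mul_sum_mul_comm u x y).symm + sum_mul_sum_mul_comm u x q - hx + hy
    + sum_mul_sum_mul_comm u p y - mu * hq + lam * hp
    + lamStar_eq_muStar_of_kkt u hp hq hKKT1 hKKT2

end BilinearKKT

theorem stmt_14_general {N M : ℕ} (σ : ℝ → ℝ) (hσ : ∀ x : ℝ, σ x = (1 + Real.exp (-x))⁻¹)
    (u : Matrix (Fin N) (Fin M) ℝ)
    (p : Fin N → ℝ) (q : Fin M → ℝ)
    (hp01 : ∀ i, p i ∈ Set.Ioo (0:ℝ) 1) (hq01 : ∀ j, q j ∈ Set.Ioo (0:ℝ) 1)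
    (hp : ∑ i, p i = 1) (hq : ∑ j, q j = 1)
    (lamStar muStar : ℝ)
    (hKKT1 : ∀ i, ∑ j, u i j * q j + lamStar = 0)
    (hKKT2 : ∀ j, ∑ i, u i j * p i + muStar = 0)
    (H : (Fin N → ℝ) → (Fin M → ℝ) → ℝ → ℝ → ℝ)
    (hH : ∀ (θ : Fin N → ℝ) (φ : Fin M → ℝ) (lam mu : ℝ),
      H θ φ lam mu =
        (∑ i, ∫ z in (p i)..(σ (θ i)), (z - p i) / (z ^ 2 * (1 - z) ^ 2)) +
        (∑ j, ∫ z in (q j)..(σ (φ j)), (z - q j) / (z ^ 2 * (1 - z) ^ 2)) +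
        (lam - lamStar) ^ 2 / 2 + (mu - muStar) ^ 2 / 2)
    (α : ℝ)
    (θ : Fin N → ℝ) (φ : Fin M → ℝ) (lam mu : ℝ) :
    H θ φ lam mu ≤
      H (fun i => θ i - α * deriv σ (θ i) * (∑ j, u i j * σ (φ j) + lam))
        (fun j => φ j + α * deriv σ (φ j) * (∑ i, u i j * σ (θ i) + mu))
        (lam + α * (∑ i, σ (θ i) - 1))
        (mu - α * (∑ j, σ (φ j) - 1)) := by
  obtain rfl : σ = sigmoid := funext hσ
  have hθ := sum_le_sum_integral_sigmoid_add_deriv_mul hp01 θ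
    fun i => -(α * (∑ j, u i j * sigmoid (φ j) + lam))
  have hφ := sum_le_sum_integral_sigmoid_add_deriv_mul hq01 φ
    fun j => α * (∑ i, u i j * sigmoid (θ i) + mu)
  simp only [mul_neg, Finset.sum_neg_distrib, mul_left_comm _ α, ← Finset.mul_sum] at hθ hφ
  have hpair := sum_gda_pairing_of_kkt u hp hq hKKT1 hKKT2 (fun i => sigmoid (θ i))
    (fun j => sigmoid (φ j)) lam mu
  have hdesc (x g : ℝ) : x - α * deriv sigmoid x * g = x + -(α * (deriv sigmoid x * g)) := by
    ring
  have hasc (x g : ℝ) : x + α * deriv sigmoid x * g = x + α * (deriv sigmoid x * g) := by ring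
  rw [hH, hH]
  simp only [hdesc, hasc]
  linarith [congrArg (α * ·) hpair, sq_nonneg (α * (∑ i, sigmoid (θ i) - 1)),
    sq_nonneg (α * (∑ j, sigmoid (φ j) - 1))]

/-- For the hidden bilinear game with sigmoid activations, the energy
`H` is non-decreasing along one step of discrete-time gradient-descent-ascent with
learning rate `α ≥ 0`. -/
theorem stmt_14 {N M : ℕ} (σ : ℝ → ℝ) (hσ : ∀ x : ℝ, σ x = (1 + Real.exp (-x))⁻¹)
    (u : Matrix (Fin N) (Fin M) ℝ)
    (p : Fin N → ℝ) (q : Fin M → ℝ)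
    (hp01 : ∀ i, p i ∈ Set.Ioo (0:ℝ) 1) (hq01 : ∀ j, q j ∈ Set.Ioo (0:ℝ) 1)
    (hp : ∑ i, p i = 1) (hq : ∑ j, q j = 1)
    (lamStar muStar : ℝ)
    (hKKT1 : ∀ i, ∑ j, u i j * q j + lamStar = 0)
    (hKKT2 : ∀ j, ∑ i, u i j * p i + muStar = 0)
    (H : (Fin N → ℝ) → (Fin M → ℝ) → ℝ → ℝ → ℝ)
    (hH : ∀ (θ : Fin N → ℝ) (φ : Fin M → ℝ) (lam mu : ℝ),
      H θ φ lam mu =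
        (∑ i, ∫ z in (p i)..(σ (θ i)), (z - p i) / (z ^ 2 * (1 - z) ^ 2)) +
        (∑ j, ∫ z in (q j)..(σ (φ j)), (z - q j) / (z ^ 2 * (1 - z) ^ 2)) +
        (lam - lamStar) ^ 2 / 2 + (mu - muStar) ^ 2 / 2)
    (α : ℝ) (hα : 0 ≤ α)
    (θ : Fin N → ℝ) (φ : Fin M → ℝ) (lam mu : ℝ) :
    H θ φ lam mu ≤
      H (fun i => θ i - α * deriv σ (θ i) * (∑ j, u i j * σ (φ j) + lam))
        (fun j => φ j + α * deriv σ (φ j) * (∑ i, u i j * σ (θ i) + mu))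
        (lam + α * (∑ i, σ (θ i) - 1))
        (mu - α * (∑ j, σ (φ j) - 1)) :=
  stmt_14_general σ hσ u p q hp01 hq01 hp hq lamStar muStar hKKT1 hKKT2 H hH α θ φ lam mu
end

section
/- Let u₀₀, u₀₁, u₁₀, u₁₁ ∈ ℝ with v = u₀₀ - u₀₁ - u₁₀ + u₁₁ ≠ 0, and let q = -(u₀₁ - u₁₁)/v ∈ (0,1) and p = -(u₁₀ - u₁₁)/v ∈ (0,1). Then there exist a learning rate α > 0, C² functions f, g : ℝ → ℝ, a point (θ*, φ*) ∈ ℝ² with f'(θ*) = 0, g'(φ*) = 0 and (f(θ*), g(φ*)) ≠ (p, q), and a Lebesgue measurable set S ⊆ ℝ² of positive Lebesgue measure, such that for every (θ₀, φ₀) ∈ S the iterates of the discrete GDA map T(θ, φ) = (θ - α v f'(θ)(g(φ) - q), φ + α v g'(φ)(f(θ) - p)) starting from (θ₀, φ₀) converge to (θ*, φ*) as the number of iterations tends to infinity. -/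
open Filter MeasureTheory Topology

/- The spurious equilibrium is the saddle point `(0, 0)` of `f θ = p + 1 + v θ² / 2` and
`g φ = q + 1 - v φ² / 2`, where `(f, g) = (p + 1, q + 1)`. With learning rate `α = 1 / v²`
the linear part of the GDA map at `(0, 0)` vanishes, and the map becomes
`(θ, φ) ↦ (θ v φ² / 2, -φ v θ² / 2)`, whose sup norm is at most `|v| ‖(θ, φ)‖³ / 2`.
It therefore halves the norm on the ball of radius `1 / √|v|`, so every orbit starting in
that ball converges to `(0, 0)`. -/

theorem tendsto_iterate_zero_of_norm_le_mul {E : Type*} [SeminormedAddCommGroup E]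
    {T : E → E} {r c : ℝ} (hc₀ : 0 ≤ c) (hc₁ : c < 1)
    (hT : ∀ x, ‖x‖ < r → ‖T x‖ ≤ c * ‖x‖) {x : E} (hx : ‖x‖ < r) :
    Tendsto (fun k : ℕ => T^[k] x) atTop (𝓝 0) := by
  have hbound : ∀ k : ℕ, ‖T^[k] x‖ ≤ c ^ k * ‖x‖ := by
    intro k
    induction k with
    | zero => simp
    | succ k ih =>
      have hck : c ^ k * ‖x‖ ≤ ‖x‖ := mul_le_of_le_one_left (norm_nonneg x) (pow_le_one₀ hc₀ hc₁.le)
      calc ‖T^[k + 1] x‖ = ‖T (T^[k] x)‖ := by rw [Function.iterate_succ_apply']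
        _ ≤ c * ‖T^[k] x‖ := hT _ (ih.trans_lt (hck.trans_lt hx))
        _ ≤ c * (c ^ k * ‖x‖) := mul_le_mul_of_nonneg_left ih hc₀
        _ = c ^ (k + 1) * ‖x‖ := by ring
  refine squeeze_zero_norm hbound ?_
  simpa using (tendsto_pow_atTop_nhds_zero_of_lt_one hc₀ hc₁).mul_const ‖x‖

noncomputable def bowl (a c : ℝ) (t : ℝ) : ℝ := a + c * t ^ 2 / 2

theorem contDiff_bowl (a c : ℝ) : ContDiff ℝ 2 (bowl a c) := by
  unfold bowl; fun_prop

theorem deriv_bowl (a c t : ℝ) : deriv (bowl a c) t = c * t := by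
  have h : HasDerivAt (bowl a c) (c * (↑2 * t ^ 1) / 2) t :=
    (((hasDerivAt_pow 2 t).const_mul c).div_const 2).const_add a
  rw [h.deriv]
  ring

noncomputable def gdaStep (α v p q : ℝ) (f g : ℝ → ℝ) (x : ℝ × ℝ) : ℝ × ℝ :=
  (x.1 - α * v * deriv f x.1 * (g x.2 - q), x.2 + α * v * deriv g x.2 * (f x.1 - p))

theorem gdaStep_bowl {v : ℝ} (hv : v ≠ 0) (p q : ℝ) (x : ℝ × ℝ) :
    gdaStep (1 / v ^ 2) v p q (bowl (p + 1) v) (bowl (q + 1) (-v)) x =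
      (x.1 * (v * x.2 ^ 2 / 2), -(x.2 * (v * x.1 ^ 2 / 2))) := by
  simp only [gdaStep, deriv_bowl, bowl, Prod.mk.injEq]
  constructor <;> (field_simp; ring)

theorem norm_gdaStep_bowl_le {v : ℝ} (hv : v ≠ 0) (p q : ℝ) (x : ℝ × ℝ) :
    ‖gdaStep (1 / v ^ 2) v p q (bowl (p + 1) v) (bowl (q + 1) (-v)) x‖ ≤ |v| / 2 * ‖x‖ ^ 3 := by
  have h₁ : |x.1| ≤ ‖x‖ := norm_fst_le x
  have h₂ : |x.2| ≤ ‖x‖ := norm_snd_le x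
  have hcoord : ∀ a b : ℝ, |a| ≤ ‖x‖ → |b| ≤ ‖x‖ → |a * (v * b ^ 2 / 2)| ≤ |v| / 2 * ‖x‖ ^ 3 := by
    intro a b ha hb
    rw [abs_mul, abs_div, abs_mul, abs_two, abs_pow]
    calc |a| * (|v| * |b| ^ 2 / 2) ≤ ‖x‖ * (|v| * ‖x‖ ^ 2 / 2) := by gcongr
      _ = |v| / 2 * ‖x‖ ^ 3 := by ring
  rw [gdaStep_bowl hv, Prod.norm_def, Real.norm_eq_abs, Real.norm_eq_abs, abs_neg]
  exact max_le (hcoord _ _ h₁ h₂) (hcoord _ _ h₂ h₁)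

theorem norm_gdaStep_bowl_le_half {v : ℝ} (hv : v ≠ 0) (p q : ℝ) {x : ℝ × ℝ}
    (hx : ‖x‖ < (√|v|)⁻¹) :
    ‖gdaStep (1 / v ^ 2) v p q (bowl (p + 1) v) (bowl (q + 1) (-v)) x‖ ≤ 1 / 2 * ‖x‖ := by
  have hsq : |v| * ‖x‖ ^ 2 ≤ 1 := by
    have hr : |v| * ((√|v|)⁻¹) ^ 2 = 1 := by
      rw [inv_pow, Real.sq_sqrt (abs_nonneg v), mul_inv_cancel₀ (abs_ne_zero.mpr hv)]
    calc |v| * ‖x‖ ^ 2 ≤ |v| * ((√|v|)⁻¹) ^ 2 := by gcongr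
      _ = 1 := hr
  calc _ ≤ |v| / 2 * ‖x‖ ^ 3 := norm_gdaStep_bowl_le hv p q x
    _ = (|v| * ‖x‖ ^ 2) / 2 * ‖x‖ := by ring
    _ ≤ 1 / 2 * ‖x‖ := by gcongr

theorem stmt_16_general (v p q : ℝ) (hv0 : v ≠ 0) :
    ∃ α : ℝ, 0 < α ∧
    ∃ f g : ℝ → ℝ, ContDiff ℝ 2 f ∧ ContDiff ℝ 2 g ∧
    ∃ θstar φstar : ℝ,
      deriv f θstar = 0 ∧ deriv g φstar = 0 ∧ (f θstar, g φstar) ≠ (p, q) ∧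
      ∃ S : Set (ℝ × ℝ), MeasurableSet S ∧ 0 < volume S ∧
        ∀ θ₀ φ₀ : ℝ, (θ₀, φ₀) ∈ S →
          Tendsto
            (fun k : ℕ =>
              (fun x : ℝ × ℝ =>
                (x.1 - α * v * deriv f x.1 * (g x.2 - q),
                 x.2 + α * v * deriv g x.2 * (f x.1 - p)))^[k] (θ₀, φ₀))
            atTop (nhds (θstar, φstar)) := by
  have hr : 0 < (√|v|)⁻¹ := inv_pos.mpr (Real.sqrt_pos.mpr (abs_pos.mpr hv0))
  refine ⟨1 / v ^ 2, by positivity, bowl (p + 1) v, bowl (q + 1) (-v),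
    contDiff_bowl _ _, contDiff_bowl _ _, 0, 0, by simp [deriv_bowl], by simp [deriv_bowl],
    by simp [bowl], Metric.ball 0 (√|v|)⁻¹, measurableSet_ball,
    Metric.measure_ball_pos volume _ hr, fun θ₀ φ₀ hx => ?_⟩
  exact tendsto_iterate_zero_of_norm_le_mul (T := gdaStep (1 / v ^ 2) v p q _ _)
    (by norm_num) (by norm_num) (fun _ => norm_gdaStep_bowl_le_half hv0 p q)
    (mem_ball_zero_iff.mp hx)

/-- There exist a learning rate `α > 0`, `C²` functions `f, g`, a
spurious fixed point `(θ*, φ*)` and a positive-measure set of initial conditions from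
which the iterates of the discrete GDA map converge to `(θ*, φ*)`. -/
theorem stmt_16 (u₀₀ u₀₁ u₁₀ u₁₁ : ℝ) (v p q : ℝ)
    (hv : v = u₀₀ - u₀₁ - u₁₀ + u₁₁) (hv0 : v ≠ 0)
    (hq : q = -(u₀₁ - u₁₁) / v) (hp : p = -(u₁₀ - u₁₁) / v)
    (hp01 : p ∈ Set.Ioo (0:ℝ) 1) (hq01 : q ∈ Set.Ioo (0:ℝ) 1) :
    ∃ α : ℝ, 0 < α ∧
    ∃ f g : ℝ → ℝ, ContDiff ℝ 2 f ∧ ContDiff ℝ 2 g ∧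
    ∃ θstar φstar : ℝ,
      deriv f θstar = 0 ∧ deriv g φstar = 0 ∧ (f θstar, g φstar) ≠ (p, q) ∧
      ∃ S : Set (ℝ × ℝ), MeasurableSet S ∧ 0 < volume S ∧
        ∀ θ₀ φ₀ : ℝ, (θ₀, φ₀) ∈ S →
          Tendsto
            (fun k : ℕ =>
              (fun x : ℝ × ℝ =>
                (x.1 - α * v * deriv f x.1 * (g x.2 - q),
                 x.2 + α * v * deriv g x.2 * (f x.1 - p)))^[k] (θ₀, φ₀))
            atTop (nhds (θstar, φstar)) :=
  stmt_16_general v p q hv0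
end
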